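/- arXiv:math/0209100 — 5 statements merged into one kernel-verified Lean document; each statement's English description precedes it below -/
import Mathlib

section
/- If ≺ is a C_n-admissible ordering of [n] ∪ [n]*, then the n largest elements under ≺ form an admissible set of size n. -/
/-- `J n` models `[n] ∪ [n]*` : the element `(i, false)` is `i` and `(i, true)` is `i*`. -/
abbrev J (n : ℕ) := Fin n × Bool

/-- The star involution `i ↦ i*`, `i* ↦ i`. -/
def jstar {n : ℕ} (x : J n) : J n := (x.1, !x.2)

/-- `K* = { k* : k ∈ K }`. -/
def starSet {n : ℕ} (K : Finset (J n)) : Finset (J n) := K.image jstar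

/-- A subset `K ⊆ [n] ∪ [n]*` is admissible if `K ∩ K* = ∅`. -/
def Admissible {n : ℕ} (K : Finset (J n)) : Prop := K ∩ starSet K = ∅

/-!
If `T` contained both `x` and `x*`, then its `n` elements would cover at most `n - 1` indices,
so some index `i` has neither `i` nor `i*` in `T`. Both lie below every element of `T`; from
`i* ≺ x` the `Cₙ`-admissibility of `≺` gives `x* ≺ i`, contradicting `i ≺ x*`.
-/

@[simp]
lemma jstar_jstar {n : ℕ} (x : J n) : jstar (jstar x) = x := by
  simp [jstar]

lemma jstar_ne_self {n : ℕ} (x : J n) : jstar x ≠ x := by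
  simp [jstar, Prod.ext_iff]

lemma mem_starSet {n : ℕ} {K : Finset (J n)} {x : J n} : x ∈ starSet K ↔ jstar x ∈ K := by
  rw [starSet, Finset.mem_image]
  exact ⟨fun ⟨y, hy, hyx⟩ => hyx ▸ (jstar_jstar y).symm ▸ hy,
    fun hx => ⟨jstar x, hx, jstar_jstar x⟩⟩

lemma admissible_iff {n : ℕ} {K : Finset (J n)} : Admissible K ↔ ∀ x ∈ K, jstar x ∉ K := by
  simp only [Admissible, Finset.eq_empty_iff_forall_notMem, Finset.mem_inter, mem_starSet,
    not_and]

lemma Finset.exists_forall_notMem_of_card_le_of_not_injOn_fst {α β : Type*} [Fintype α]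
    [DecidableEq α] {T : Finset (α × β)} (hcard : T.card ≤ Fintype.card α)
    (hinj : ¬ Set.InjOn Prod.fst (T : Set (α × β))) : ∃ a, ∀ b, (a, b) ∉ T := by
  have hlt : (T.image Prod.fst).card < (Finset.univ : Finset α).card := by
    rw [Finset.card_univ]
    exact lt_of_lt_of_le (lt_of_le_of_ne Finset.card_image_le (mt Finset.card_image_iff.mp hinj))
      hcard
  obtain ⟨a, -, ha⟩ := Finset.exists_mem_notMem_of_card_lt_card hlt
  exact ⟨a, fun b hab => ha (Finset.mem_image_of_mem Prod.fst hab)⟩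

lemma not_injOn_fst_of_mem_of_jstar_mem {n : ℕ} {T : Finset (J n)} {x : J n} (hx : x ∈ T)
    (hx' : jstar x ∈ T) : ¬ Set.InjOn Prod.fst (T : Set (J n)) :=
  fun hinj => jstar_ne_self x (hinj hx' hx rfl)

/-- in a `Cₙ`-admissible linear ordering of `[n] ∪ [n]*`, the `n` largest
elements form an admissible set (of size `n`). -/
theorem top_n_admissible (n : ℕ) (lt : J n → J n → Prop)
    (hlin : IsStrictTotalOrder (J n) lt)
    (hC : ∀ i j : J n, lt i j → lt (jstar j) (jstar i))
    (T : Finset (J n)) (hcard : T.card = n)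
    (htop : ∀ x ∈ T, ∀ y ∉ T, lt y x) :
    Admissible T := by
  rw [admissible_iff]
  intro x hx hx'
  obtain ⟨i, hi⟩ := Finset.exists_forall_notMem_of_card_le_of_not_injOn_fst
    (by simp [hcard]) (not_injOn_fst_of_mem_of_jstar_mem hx hx')
  have below_x : lt (i, true) x := htop x hx _ (hi true)
  have below_x' : lt (i, false) (jstar x) := htop _ hx' _ (hi false)
  exact asymm_of lt (hC _ _ below_x) below_x'
end

section
/- If B is the collection of bases of a matroid of rank k on [n], then Φ(B) = {Φ(B) : B ∈ B} satisfies the Strong Exchange Property, i.e., Φ(B) is the collection of bases of a Lagrangian orthogonal matroid. -/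
/-- The Strong Exchange Property for a collection of subsets of `[n] ∪ [n]*`. -/
def StrongExchange {n : ℕ} (𝔅 : Set (Finset (J n))) : Prop :=
  ∀ A ∈ 𝔅, ∀ C ∈ 𝔅, ∀ a ∈ symmDiff A C, ∃ b ∈ C \ A, b ≠ jstar a ∧
    symmDiff A {a, b, jstar a, jstar b} ∈ 𝔅 ∧ symmDiff C {a, b, jstar a, jstar b} ∈ 𝔅

/-- `ℬ` is the collection of bases of a matroid of rank `k` on `[n]`. -/
def MatroidBases {n : ℕ} (k : ℕ) (ℬ : Set (Finset (Fin n))) : Prop :=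
  ℬ.Nonempty ∧ (∀ B ∈ ℬ, B.card = k) ∧
    ∀ A ∈ ℬ, ∀ B ∈ ℬ, ∀ a ∈ A \ B, ∃ b ∈ B \ A, insert b (A.erase a) ∈ ℬ

/-- `Φ(B) = B ∪ ([n] \ B)*`. -/
def Phi {n : ℕ} (B : Finset (Fin n)) : Finset (J n) :=
  B.image (fun i => (i, false)) ∪ Bᶜ.image (fun i => (i, true))

/-!
Since `{a, b, a*, b*} = {i, i*, j, j*}` for `a ∈ {i, i*}` and `b ∈ {j, j*}`, and
`Φ(B) △ {i, i*, j, j*} = Φ(B △ {i, j})`, strong exchange for `Φ(ℬ)` is the symmetric basis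
exchange property of the matroid: for bases `B₁, B₂` and `i ∈ B₁ △ B₂` there is
`j ∈ B₁ △ B₂`, `j ≠ i`, such that `B₁ △ {i, j}` and `B₂ △ {i, j}` are both bases.
-/

namespace Matroid

open Set

variable {α : Type*} {M : Matroid α} {A B : Set α} {e : α}

/-- The fundamental circuit of `e` in `B` meets the fundamental cocircuit of `e` in `A` in `e`,
hence, as a circuit and a cocircuit never meet in exactly one element, in a second element `f`;
`f` can then be exchanged with `e` in both directions. -/
lemma IsBase.exists_symm_exchange (hA : M.IsBase A) (hB : M.IsBase B) (he : e ∈ A \ B) :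
    ∃ f ∈ B \ A, M.IsBase (insert f (A \ {e})) ∧ M.IsBase (insert e (B \ {f})) := by
  have heE : e ∈ M.E := hA.subset_ground he.1
  have hC := hB.fundCircuit_isCircuit heE he.2
  have hK := M.fundCocircuit_isCocircuit he.1 hA
  obtain ⟨f, ⟨hfC, hfK⟩, hfe⟩ := (hC.isCocircuit_inter_nontrivial hK
    ⟨e, M.mem_fundCircuit e B, M.mem_fundCocircuit e A⟩).exists_ne e
  have hfB : f ∈ B := by
    simpa [hfe] using M.fundCircuit_subset_insert e B hfC
  have hfA : f ∉ A := fun hfA ↦ hfe <| (M.fundCocircuit_inter_eq he.1).subset ⟨hfK, hfA⟩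
  refine ⟨f, ⟨hfB, hfA⟩, ?_, ?_⟩
  · have hfcl : f ∈ M.closure A := by rw [hA.closure_eq]; exact hB.subset_ground hfB
    rw [hA.mem_fundCocircuit_iff_mem_fundCircuit, hA.indep.mem_fundCircuit_iff hfcl hfA] at hfK
    exact hA.exchange_isBase_of_indep hfA (by rwa [insert_sdiff_singleton_comm hfe])
  · have hecl : e ∈ M.closure B := by rw [hB.closure_eq]; exact heE
    rw [hB.indep.mem_fundCircuit_iff hecl he.2] at hfC
    exact hB.exchange_isBase_of_indep he.2 (by rwa [insert_sdiff_singleton_comm hfe.symm])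

end Matroid

lemma Finset.symmDiff_pair_eq_insert_erase {α : Type*} [DecidableEq α] {s : Finset α} {i j : α}
    (hi : i ∈ s) (hj : j ∉ s) : symmDiff s {i, j} = insert j (s.erase i) := by
  ext x
  by_cases hxi : x = i <;> by_cases hxj : x = j <;> simp_all [Finset.mem_symmDiff]

namespace MatroidBases

variable {n k : ℕ} {ℬ : Set (Finset (Fin n))}

lemma exchangeProperty (h : MatroidBases k ℬ) :
    Matroid.ExchangeProperty (· ∈ ((↑) : Finset (Fin n) → Set (Fin n)) '' ℬ) := by
  rintro _ _ ⟨X, hX, rfl⟩ ⟨Y, hY, rfl⟩ a ha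
  obtain ⟨b, hb, hXb⟩ := h.2.2 X hX Y hY a (by simpa using ha)
  exact ⟨b, by simpa using hb, _, hXb, by simp⟩

def toMatroid (h : MatroidBases k ℬ) : Matroid (Fin n) :=
  Matroid.ofIsBaseOfFinite Set.finite_univ _ (h.1.image _) h.exchangeProperty
    (fun _ _ ↦ Set.subset_univ _)

lemma toMatroid_isBase_coe_iff (h : MatroidBases k ℬ) {B : Finset (Fin n)} :
    h.toMatroid.IsBase ↑B ↔ B ∈ ℬ :=
  Finset.coe_injective.mem_set_image

lemma exists_symm_exchange (h : MatroidBases k ℬ) {B₁ B₂ : Finset (Fin n)}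
    (h₁ : B₁ ∈ ℬ) (h₂ : B₂ ∈ ℬ) {i : Fin n} (hi : i ∈ B₁ \ B₂) :
    ∃ j ∈ B₂ \ B₁, insert j (B₁.erase i) ∈ ℬ ∧ insert i (B₂.erase j) ∈ ℬ := by
  obtain ⟨j, hj, hB₁, hB₂⟩ := ((h.toMatroid_isBase_coe_iff).2 h₁).exists_symm_exchange
    ((h.toMatroid_isBase_coe_iff).2 h₂) (by simpa using hi)
  refine ⟨j, by simpa using hj, ?_, ?_⟩
  · rw [← h.toMatroid_isBase_coe_iff]; simpa using hB₁
  · rw [← h.toMatroid_isBase_coe_iff]; simpa using hB₂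

lemma exists_symmDiff_pair (h : MatroidBases k ℬ) {B₁ B₂ : Finset (Fin n)}
    (h₁ : B₁ ∈ ℬ) (h₂ : B₂ ∈ ℬ) {i : Fin n} (hi : i ∈ symmDiff B₁ B₂) :
    ∃ j ∈ symmDiff B₁ B₂, j ≠ i ∧ symmDiff B₁ {i, j} ∈ ℬ ∧ symmDiff B₂ {i, j} ∈ ℬ := by
  wlog hi₁ : i ∈ B₁ \ B₂ generalizing B₁ B₂
  · rw [symmDiff_comm] at hi ⊢
    obtain ⟨j, hj, hji, hB₂, hB₁⟩ :=
      this h₂ h₁ hi <|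
        Finset.mem_sdiff.2 ((Finset.mem_symmDiff.1 hi).resolve_right (mt Finset.mem_sdiff.2 hi₁))
    exact ⟨j, hj, hji, hB₁, hB₂⟩
  obtain ⟨j, hj, hB₁, hB₂⟩ := h.exists_symm_exchange h₁ h₂ hi₁
  rw [Finset.mem_sdiff] at hi₁ hj
  refine ⟨j, Finset.mem_symmDiff.2 (.inr hj), fun hji ↦ hj.2 (hji ▸ hi₁.1), ?_, ?_⟩
  · rwa [Finset.symmDiff_pair_eq_insert_erase hi₁.1 hj.2]
  · rwa [Finset.pair_comm, Finset.symmDiff_pair_eq_insert_erase hj.1 hi₁.2]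

end MatroidBases

section Phi

variable {n : ℕ}

lemma mem_Phi {B : Finset (Fin n)} {x : J n} : x ∈ Phi B ↔ (x.1 ∈ B ↔ x.2 = false) := by
  obtain ⟨i, _ | _⟩ := x <;> simp [Phi]

lemma mem_symmDiff_Phi {B₁ B₂ : Finset (Fin n)} {x : J n} :
    x ∈ symmDiff (Phi B₁) (Phi B₂) ↔ x.1 ∈ symmDiff B₁ B₂ := by
  simp only [Finset.mem_symmDiff, mem_Phi]
  tauto

lemma exists_mem_Phi_sdiff {B₁ B₂ : Finset (Fin n)} {j : Fin n} (hj : j ∈ symmDiff B₁ B₂) :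
    ∃ c, (j, c) ∈ Phi B₂ \ Phi B₁ := by
  refine ⟨decide (j ∉ B₂), ?_⟩
  simp only [Finset.mem_sdiff, mem_Phi, Finset.mem_symmDiff] at hj ⊢
  by_cases hj₂ : j ∈ B₂ <;> simp_all

lemma insert_jstar_eq_product (a b : J n) :
    ({a, b, jstar a, jstar b} : Finset (J n)) = {a.1, b.1} ×ˢ Finset.univ := by
  ext ⟨i, c⟩
  obtain ⟨_, _ | _⟩ := a <;> obtain ⟨_, _ | _⟩ := b <;> cases c <;> simp [jstar] <;> tauto

lemma symmDiff_Phi_product (B S : Finset (Fin n)) :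
    symmDiff (Phi B) (S ×ˢ Finset.univ) = Phi (symmDiff B S) := by
  ext x
  simp only [Finset.mem_symmDiff, mem_Phi, Finset.mem_product, Finset.mem_univ, and_true]
  tauto

end Phi

/-- if `ℬ` is the collection of bases of a matroid of rank `k` on `[n]`,
then `Φ(ℬ)` satisfies the Strong Exchange Property, i.e. it is the collection of bases of
a Lagrangian orthogonal matroid. -/
theorem phi_matroid_strong_exchange (n k : ℕ) (ℬ : Set (Finset (Fin n)))
    (h : MatroidBases k ℬ) :
    StrongExchange (Phi '' ℬ) := by
  rintro _ ⟨B₁, h₁, rfl⟩ _ ⟨B₂, h₂, rfl⟩ a ha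
  obtain ⟨j, hj, hja, hB₁, hB₂⟩ := h.exists_symmDiff_pair h₁ h₂ (mem_symmDiff_Phi.1 ha)
  obtain ⟨c, hc⟩ := exists_mem_Phi_sdiff hj
  refine ⟨(j, c), hc, fun hjc ↦ hja (congrArg Prod.fst hjc), ?_, ?_⟩ <;>
    rw [insert_jstar_eq_product, symmDiff_Phi_product]
  exacts [⟨_, hB₁, rfl⟩, ⟨_, hB₂, rfl⟩]
end

section
/- For bases A, B of a matroid on [n], and for a D_n-admissible order ≺ on [n] ∪ [n]* restricting to the linear order ≤ on [n]: if A ≤ B in the Gale order on k-subsets of [n], then Φ(A) ≺ Φ(B) in the Gale order on admissible n-subsets. -/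
/-- Gale order: `A ≤ B` iff there is an injection of `A` into `B` increasing each element. -/
def GaleLE {α : Type*} (r : α → α → Prop) (A B : Finset α) : Prop :=
  ∃ f : α → α, Set.InjOn f A ∧ (∀ a ∈ A, f a ∈ B) ∧ ∀ a ∈ A, r a (f a)

/-- A `Dₙ`-admissible ordering of `[n] ∪ [n]*`: a partial order reversed by `*`,
linear except that the middle two elements (a pair `{i, i*}`) are incomparable. -/
structure DnOrder (n : ℕ) where
  le : J n → J n → Prop
  refl : ∀ i, le i i
  trans : ∀ i j k, le i j → le j k → le i k
  antisymm : ∀ i j, le i j → le j i → i = j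
  star_anti : ∀ i j, le i j → le (jstar j) (jstar i)
  almost_total : ∀ i j : J n, le i j ∨ le j i ∨ j = jstar i
  middle : ∃ i : J n, ¬ le i (jstar i) ∧ ¬ le (jstar i) i

/-!
The map `Φ` sends `A` to the copy of `A` together with the starred copy of `Aᶜ`, and `≺` agrees
with `≤` on `[n]` and with its reverse on `[n]*`. So it suffices to match `A` into `B` upwards,
which is the hypothesis, and `Aᶜ` into `Bᶜ` downwards. The latter follows from Hall's theorem:
since `#A = #B` and `A` has at most as many elements above any `m` as `B`, the complement `Aᶜ`
has at most as many elements below `m` as `Bᶜ`.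
-/

open Finset Function

section Gale

variable {α : Type*} {r : α → α → Prop}

lemma Finset.exists_mem_forall_rel [IsTrans α r] [Std.Total r] {s : Finset α}
    (hs : s.Nonempty) : ∃ m ∈ s, ∀ x ∈ s, r x m := by
  induction hs using Finset.Nonempty.cons_induction with
  | singleton a => exact ⟨a, mem_singleton_self a, fun x hx => mem_singleton.1 hx ▸ refl_of r x⟩
  | cons a s _ _ ih =>
    obtain ⟨m, hm, hmax⟩ := ih
    rcases total_of r a m with ham | hma
    · exact ⟨m, mem_cons_of_mem hm, by simpa [ham] using hmax⟩
    · refine ⟨a, mem_cons_self a s, ?_⟩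
      simpa [refl_of r a] using fun x hx => trans_of r (hmax x hx) hma

namespace GaleLE

variable {s t : Finset α}

lemma card_filter_le (h : GaleLE r s t) (p : α → Prop) [DecidablePred p]
    (hp : ∀ a b, r a b → p a → p b) : #(s.filter p) ≤ #(t.filter p) := by
  obtain ⟨f, hf, hft, hfr⟩ := h
  refine card_le_card_of_injOn f (fun a ha => ?_) (hf.mono fun a ha => (mem_filter.1 ha).1)
  obtain ⟨has, hpa⟩ := mem_filter.1 ha
  exact mem_filter.2 ⟨hft a has, hp a _ (hfr a has) hpa⟩

lemma union [DecidableEq α] {s' t' : Finset α} (h : GaleLE r s t) (h' : GaleLE r s' t')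
    (hs : Disjoint s s') (ht : Disjoint t t') : GaleLE r (s ∪ s') (t ∪ t') := by
  obtain ⟨f, hf, hft, hfr⟩ := h
  obtain ⟨g, hg, hgt, hgr⟩ := h'
  have hFf : Set.EqOn (s.piecewise f g) f s := fun _ hx => piecewise_eq_of_mem s f g hx
  have hFg : Set.EqOn (s.piecewise f g) g s' := fun x hx =>
    piecewise_eq_of_notMem s f g (disjoint_right.1 hs hx)
  refine ⟨s.piecewise f g, ?_, ?_, ?_⟩
  · rw [coe_union, Set.injOn_union (disjoint_coe.2 hs)]
    refine ⟨hf.congr hFf.symm, hg.congr hFg.symm, fun x hx y hy hxy => ?_⟩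
    rw [hFf hx, hFg hy] at hxy
    exact disjoint_left.1 ht (hft x hx) (hxy ▸ hgt y hy)
  · intro a ha
    rcases mem_union.1 ha with ha | ha
    · exact mem_union_left _ (hFf ha ▸ hft a ha)
    · exact mem_union_right _ (hFg ha ▸ hgt a ha)
  · intro a ha
    rcases mem_union.1 ha with ha | ha
    · exact hFf ha ▸ hfr a ha
    · exact hFg ha ▸ hgr a ha

lemma image {β : Type*} [DecidableEq β] {r' : β → β → Prop} {e : α → β} (he : Injective e)
    (hr : ∀ a b, r a b → r' (e a) (e b)) (h : GaleLE r s t) :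
    GaleLE r' (s.image e) (t.image e) := by
  obtain ⟨f, hf, hft, hfr⟩ := h
  have hF : ∀ a, extend e (e ∘ f) id (e a) = e (f a) := fun a => he.extend_apply _ _ a
  refine ⟨extend e (e ∘ f) id, ?_, ?_, ?_⟩
  · rw [coe_image]
    rintro _ ⟨a, ha, rfl⟩ _ ⟨b, hb, rfl⟩ hab
    rw [hF, hF] at hab
    exact congrArg e (hf ha hb (he hab))
  · simpa only [forall_mem_image, hF] using fun a ha => mem_image_of_mem e (hft a ha)
  · simpa only [forall_mem_image, hF] using fun a ha => hr a _ (hfr a ha)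

end GaleLE

variable [DecidableEq α] [IsTrans α r] [Std.Total r] {s t : Finset α}

/-- Hall's condition for matching each element of `s` with a distinct element of `t` below it
reduces, by totality, to comparing the initial segments cut off at the elements of `s`. -/
lemma galeLE_flip_of_card_filter_le [DecidableRel r]
    (h : ∀ m ∈ s, #(s.filter (r · m)) ≤ #(t.filter (r · m))) : GaleLE (flip r) s t := by
  set below : s → Finset α := fun x => t.filter (r · x)
  have hall : ∀ S : Finset s, #S ≤ #(S.biUnion below) := by
    intro S
    rcases S.eq_empty_or_nonempty with rfl | hS
    · simp
    obtain ⟨m, hmS, hmax⟩ := Finset.exists_mem_forall_rel (r := fun x y : s => r x y) hS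
    calc #S = #(S.map (Embedding.subtype _)) := (card_map _).symm
      _ ≤ #(s.filter (r · m)) := card_le_card fun x hx => by
          obtain ⟨y, hy, rfl⟩ := mem_map.1 hx
          exact mem_filter.2 ⟨y.2, hmax y hy⟩
      _ ≤ #(t.filter (r · m)) := h m m.2
      _ ≤ #(S.biUnion below) := card_le_card (subset_biUnion_of_mem below hmS)
  obtain ⟨F, hFinj, hFt⟩ := (all_card_le_biUnion_card_iff_exists_injective _).1 hall
  refine ⟨fun x => if hx : x ∈ s then F ⟨x, hx⟩ else x, fun x hx y hy hxy => ?_,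
    fun x hx => ?_, fun x hx => ?_⟩
  · simp only [mem_coe] at hx hy
    exact congrArg Subtype.val (hFinj (by simpa [hx, hy] using hxy))
  · simpa [hx] using (mem_filter.1 (hFt ⟨x, hx⟩)).1
  · simpa [hx, flip] using (mem_filter.1 (hFt ⟨x, hx⟩)).2

lemma GaleLE.compl [Fintype α] (h : GaleLE r s t) (hst : #s = #t) : GaleLE (flip r) sᶜ tᶜ := by
  classical
  refine galeLE_flip_of_card_filter_le fun m _ => ?_
  have hupper := h.card_filter_le (¬ r · m) fun a b hab ham hbm => ham (trans_of r hab hbm)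
  have hsplit (u : Finset α) : #(u.filter (r · m)) + #(uᶜ.filter (r · m)) =
      #(univ.filter (r · m)) := by
    rw [← card_union_of_disjoint (disjoint_filter_filter disjoint_compl_right), ← filter_union,
      union_compl]
  have := card_filter_add_card_filter_not (s := s) (p := (r · m))
  have := card_filter_add_card_filter_not (s := t) (p := (r · m))
  have := hsplit s
  have := hsplit t
  omega

end Gale

lemma disjoint_image_mk_false_true {α : Type*} [DecidableEq α] (s t : Finset α) :
    Disjoint (s.image (·, false)) (t.image (·, true)) := by
  simp [disjoint_left]

/-- for bases `A`, `B` of a matroid on `[n]` and a `Dₙ`-admissible order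
restricting to the linear order `≤` on `[n]`: if `A ≤ B` in the Gale order on `k`-subsets
of `[n]`, then `Φ(A) ≺ Φ(B)` in the Gale order on admissible `n`-subsets. -/
theorem gale_le_phi (n k : ℕ) (ℬ : Set (Finset (Fin n))) (h : MatroidBases k ℬ)
    (ro : Fin n → Fin n → Prop) (hro : IsLinearOrder (Fin n) ro)
    (d : DnOrder n)
    (hrestrict : ∀ i j : Fin n, d.le (i, false) (j, false) ↔ ro i j)
    (A B : Finset (Fin n)) (hA : A ∈ ℬ) (hB : B ∈ ℬ)
    (hg : GaleLE ro A B) :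
    GaleLE d.le (Phi A) (Phi B) := by
  classical
  have hcard : #A = #B := (h.2.1 A hA).trans (h.2.1 B hB).symm
  have hunstarred : GaleLE d.le (A.image (·, false)) (B.image (·, false)) :=
    hg.image (Prod.mk_left_injective false) fun a b hab => (hrestrict a b).2 hab
  have hstarred : GaleLE d.le (Aᶜ.image (·, true)) (Bᶜ.image (·, true)) :=
    (hg.compl hcard).image (Prod.mk_left_injective true) fun a b hab =>
      d.star_anti _ _ ((hrestrict b a).2 hab)
  exact hunstarred.union hstarred (disjoint_image_mk_false_true A Aᶜ)
    (disjoint_image_mk_false_true B Bᶜ)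
end

section
/- Let M_1, M_2 be matroids on [n] of ranks k and k−1 respectively. If M_2 is not a quotient of M_1, then there exists a D_n-admissible order on [n] ∪ [n]* under which the maximal bases of Φ(M_1) and Φ(M_2) do not have symmetric difference of the form {i, i*}; hence Φ(M_1) and Φ(M_2) are not a Lagrangian pair. -/
/-- `M₂` is a quotient of `M₁`: for every linear order on `[n]`, the Gale-maximal basis of
`M₂` is contained in the Gale-maximal basis of `M₁`. -/
def IsQuotient {n : ℕ} (ℬ₁ ℬ₂ : Set (Finset (Fin n))) : Prop :=
  ∀ ro : Fin n → Fin n → Prop, IsLinearOrder (Fin n) ro →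
    ∀ B₁ ∈ ℬ₁, ∀ B₂ ∈ ℬ₂,
      (∀ A ∈ ℬ₁, GaleLE ro A B₁) → (∀ A ∈ ℬ₂, GaleLE ro A B₂) → B₂ ⊆ B₁

section GaleOrder

variable {α : Type*} {r : α → α → Prop}

theorem Finset.exists_rel_maximal [IsTrans α r] {s : Finset α} (hs : s.Nonempty) :
    ∃ m ∈ s, ∀ a ∈ s, r m a → r a m := by
  let : LE α := ⟨r⟩
  obtain ⟨m, hm, hmax⟩ := s.exists_maximal hs
  exact ⟨m, hm, fun a ha => hmax ha⟩

theorem Finite.exists_forall_rel [Finite α] [Nonempty α] (r : α → α → Prop)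
    [IsLinearOrder α r] : ∃ m, ∀ a, r m a := by
  have := Fintype.ofFinite α
  obtain ⟨m, -, hmin⟩ :=
    Finset.exists_rel_maximal (r := Function.swap r) (Finset.univ_nonempty (α := α))
  exact ⟨m, fun a => (total_of r m a).elim id (hmin a (Finset.mem_univ a))⟩

/- A moved point that is maximal among the moved points would be sent to a fixed point,
which injectivity forbids. -/
theorem Set.InjOn.apply_eq_self_of_rel_apply [IsPartialOrder α r] {s : Finset α} {σ : α → α}
    (hinj : Set.InjOn σ s) (hmaps : ∀ a ∈ s, σ a ∈ s) (hle : ∀ a ∈ s, r a (σ a)) :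
    ∀ a ∈ s, σ a = a := by
  classical
  by_contra! hmoved
  obtain ⟨a₀, ha₀, hσa₀⟩ := hmoved
  obtain ⟨a, ha, hamax⟩ := Finset.exists_rel_maximal (r := r)
    (s := s.filter (fun a => σ a ≠ a)) ⟨a₀, Finset.mem_filter.2 ⟨ha₀, hσa₀⟩⟩
  obtain ⟨has, hσa⟩ := Finset.mem_filter.1 ha
  have hσσa : σ (σ a) = σ a := by
    by_contra hne
    exact hσa (antisymm_of r (hle a has)
      (hamax _ (Finset.mem_filter.2 ⟨hmaps a has, hne⟩) (hle a has))).symm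
  exact hσa (hinj (hmaps a has) has hσσa)

theorem GaleLE.subset_of_galeLE [IsPartialOrder α r] {A B : Finset α}
    (hAB : GaleLE r A B) (hBA : GaleLE r B A) : A ⊆ B := by
  obtain ⟨f, hf_inj, hf_maps, hf_le⟩ := hAB
  obtain ⟨g, hg_inj, hg_maps, hg_le⟩ := hBA
  have hgf : ∀ a ∈ A, g (f a) = a :=
    Set.InjOn.apply_eq_self_of_rel_apply (r := r)
      (fun a ha a' ha' h => hf_inj ha ha' (hg_inj (hf_maps a ha) (hf_maps a' ha') h))
      (fun a ha => hg_maps _ (hf_maps a ha))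
      (fun a ha => trans_of r (hf_le a ha) (hg_le _ (hf_maps a ha)))
  intro a ha
  have hfa_le : r (f a) a := by simpa only [hgf a ha] using hg_le _ (hf_maps a ha)
  have hfa : f a = a := antisymm_of r hfa_le (hf_le a ha)
  exact hfa ▸ hf_maps a ha

theorem GaleLE.antisymm [IsPartialOrder α r] {A B : Finset α}
    (hAB : GaleLE r A B) (hBA : GaleLE r B A) : A = B :=
  (hAB.subset_of_galeLE hBA).antisymm (hBA.subset_of_galeLE hAB)

end GaleOrder

open scoped symmDiff in
theorem Finset.subset_of_symmDiff_subset_singleton {α : Type*} [DecidableEq α]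
    {A B : Finset α} {x : α} (h : A ∆ B ⊆ {x}) (hcard : B.card ≤ A.card) : B ⊆ A := by
  intro y hyB
  by_contra hyA
  have hyx : y = x := Finset.mem_singleton.1 (h (Finset.mem_symmDiff.2 (Or.inr ⟨hyB, hyA⟩)))
  have hAB : A ⊂ B := by
    refine Finset.ssubset_iff_subset_ne.2 ⟨fun z hzA => ?_, fun hAB => hyA (hAB ▸ hyB)⟩
    by_contra hzB
    have hzx : z = x := Finset.mem_singleton.1 (h (Finset.mem_symmDiff.2 (Or.inl ⟨hzA, hzB⟩)))
    exact hyA (hyx ▸ hzx ▸ hzA)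
  exact (Finset.card_lt_card hAB).not_ge hcard

section DnOrder

variable {n : ℕ}

/-- For a linear order `r` on `[n]` with least element `m`, the order
`iₙ* < ⋯ < i₂* < {m*, m} < i₂ < ⋯ < iₙ` on `[n] ∪ [n]*`, where `m = i₁ < i₂ < ⋯ < iₙ`. -/
def dnLE (r : Fin n → Fin n → Prop) (m : Fin n) : J n → J n → Prop
  | (i, false), (j, false) => r i j
  | (i, true), (j, true) => r j i
  | (i, true), (j, false) => ¬(i = m ∧ j = m)
  | (_, false), (_, true) => False

theorem dnLE_mk_false_left_iff {r : Fin n → Fin n → Prop} {m i : Fin n} {x : J n} :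
    dnLE r m (i, false) x ↔ x.2 = false ∧ r i x.1 := by
  obtain ⟨j, _ | _⟩ := x <;> simp [dnLE]

def DnOrder.ofLinearOrder (r : Fin n → Fin n → Prop) [IsLinearOrder (Fin n) r] (m : Fin n)
    (hm : ∀ a, r m a) : DnOrder n where
  le := dnLE r m
  refl := by rintro ⟨i, _ | _⟩ <;> exact refl_of r i
  trans := by
    rintro ⟨i, _ | _⟩ ⟨j, _ | _⟩ ⟨l, _ | _⟩ hij hjl <;> simp only [dnLE] at hij hjl ⊢
    · exact trans_of r hij hjl
    · rintro ⟨rfl, rfl⟩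
      exact hij ⟨rfl, antisymm_of r hjl (hm j)⟩
    · rintro ⟨rfl, rfl⟩
      exact hjl ⟨antisymm_of r hij (hm j), rfl⟩
    · exact trans_of r hjl hij
  antisymm := by
    rintro ⟨i, _ | _⟩ ⟨j, _ | _⟩ hij hji <;> simp only [dnLE] at hij hji
    · rw [antisymm_of r hij hji]
    · rw [antisymm_of r hji hij]
  star_anti := by
    rintro ⟨i, _ | _⟩ ⟨j, _ | _⟩ h <;>
      simp only [dnLE, jstar, Bool.not_false, Bool.not_true] at h ⊢ <;> tauto
  almost_total := by
    rintro ⟨i, _ | _⟩ ⟨j, _ | _⟩ <;>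
      simp only [dnLE, jstar, Bool.not_false, Bool.not_true, Prod.mk.injEq]
    · exact (total_of r i j).imp_right Or.inl
    · grind
    · grind
    · exact (total_of r j i).imp_right Or.inl
  middle := ⟨(m, false), by simp [dnLE, jstar]⟩

@[simp]
theorem mk_false_mem_Phi {B : Finset (Fin n)} {i : Fin n} : (i, false) ∈ Phi B ↔ i ∈ B := by
  simp [Phi]

theorem galeLE_of_galeLE_dnLE_Phi {r : Fin n → Fin n → Prop} {m : Fin n}
    {A B : Finset (Fin n)} (h : GaleLE (dnLE r m) (Phi A) (Phi B)) : GaleLE r A B := by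
  obtain ⟨f, hf_inj, hf_maps, hf_le⟩ := h
  have hf_le' (a : Fin n) (ha : a ∈ A) : (f (a, false)).2 = false ∧ r a (f (a, false)).1 :=
    dnLE_mk_false_left_iff.1 (hf_le _ (mk_false_mem_Phi.2 ha))
  have hf (a : Fin n) (ha : a ∈ A) : f (a, false) = ((f (a, false)).1, false) :=
    Prod.ext rfl (hf_le' a ha).1
  refine ⟨fun a => (f (a, false)).1, fun a ha a' ha' h => ?_, fun a ha => ?_,
    fun a ha => (hf_le' a ha).2⟩
  · have hfeq : f (a, false) = f (a', false) := by
      rw [hf a ha, hf a' ha']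
      exact congrArg (·, false) h
    exact congrArg Prod.fst (hf_inj (mk_false_mem_Phi.2 ha) (mk_false_mem_Phi.2 ha') hfeq)
  · rw [← mk_false_mem_Phi, ← hf a ha]
    exact hf_maps _ (mk_false_mem_Phi.2 ha)

theorem eq_of_galeLE_dnLE_Phi {r : Fin n → Fin n → Prop} [IsPartialOrder (Fin n) r]
    {m : Fin n} {ℬ : Set (Finset (Fin n))} {B B' : Finset (Fin n)} (hB : B ∈ ℬ)
    (hmax : ∀ A ∈ ℬ, GaleLE r A B) (hB' : B' ∈ ℬ)
    (hmax' : ∀ C ∈ Phi '' ℬ, GaleLE (dnLE r m) C (Phi B')) : B = B' :=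
  (galeLE_of_galeLE_dnLE_Phi (hmax' _ ⟨B, hB, rfl⟩)).antisymm (hmax B' hB')

open scoped symmDiff in
theorem symmDiff_subset_of_symmDiff_Phi_eq {A B : Finset (Fin n)} {i : J n}
    (h : Phi A ∆ Phi B = {i, jstar i}) : A ∆ B ⊆ {i.1} := by
  intro x hx
  have hx' : (x, false) ∈ Phi A ∆ Phi B := by simpa [Finset.mem_symmDiff] using hx
  rw [h] at hx'
  simp only [Finset.mem_insert, Finset.mem_singleton, jstar] at hx' ⊢
  rcases hx' with hx' | hx' <;> exact congrArg Prod.fst hx'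

end DnOrder

theorem not_quotient_implies_not_lagrangian_pair_general (n k : ℕ)
    (ℬ₁ ℬ₂ : Set (Finset (Fin n)))
    (h₁ : MatroidBases k ℬ₁) (h₂ : MatroidBases (k - 1) ℬ₂)
    (hq : ¬ IsQuotient ℬ₁ ℬ₂) :
    ∃ d : DnOrder n, ∀ C₁ C₂ : Finset (J n),
      C₁ ∈ Phi '' ℬ₁ → C₂ ∈ Phi '' ℬ₂ →
      (∀ C ∈ Phi '' ℬ₁, GaleLE d.le C C₁) →
      (∀ C ∈ Phi '' ℬ₂, GaleLE d.le C C₂) →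
      ¬ ∃ i : J n, symmDiff C₁ C₂ = {i, jstar i} := by
  simp only [IsQuotient, not_forall] at hq
  obtain ⟨r, _, B₁, hB₁, B₂, hB₂, hmax₁, hmax₂, hB₂₁⟩ := hq
  obtain ⟨x, -, -⟩ := Finset.not_subset.1 hB₂₁
  have : Nonempty (Fin n) := ⟨x⟩
  obtain ⟨m, hm⟩ := Finite.exists_forall_rel r
  refine ⟨DnOrder.ofLinearOrder r m hm, ?_⟩
  rintro _ _ ⟨B₁', hB₁', rfl⟩ ⟨B₂', hB₂', rfl⟩ hmax₁' hmax₂' ⟨i, hi⟩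
  obtain rfl := eq_of_galeLE_dnLE_Phi hB₁ hmax₁ hB₁' hmax₁'
  obtain rfl := eq_of_galeLE_dnLE_Phi hB₂ hmax₂ hB₂' hmax₂'
  have hcard : B₂.card ≤ B₁.card := by
    rw [h₁.2.1 _ hB₁, h₂.2.1 _ hB₂]
    exact k.sub_le 1
  exact hB₂₁ (Finset.subset_of_symmDiff_subset_singleton (symmDiff_subset_of_symmDiff_Phi_eq hi)
    hcard)

/-- if `M₂` (rank `k - 1`) is not a quotient of `M₁` (rank `k`), then there
is a `Dₙ`-admissible order under which the maximal bases of `Φ(M₁)` and `Φ(M₂)` do not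
have symmetric difference `{i, i*}`; hence `Φ(M₁)`, `Φ(M₂)` are not a Lagrangian pair. -/
theorem not_quotient_implies_not_lagrangian_pair (n k : ℕ) (hk : 1 ≤ k)
    (ℬ₁ ℬ₂ : Set (Finset (Fin n)))
    (h₁ : MatroidBases k ℬ₁) (h₂ : MatroidBases (k - 1) ℬ₂)
    (hq : ¬ IsQuotient ℬ₁ ℬ₂) :
    ∃ d : DnOrder n, ∀ C₁ C₂ : Finset (J n),
      C₁ ∈ Phi '' ℬ₁ → C₂ ∈ Phi '' ℬ₂ →
      (∀ C ∈ Phi '' ℬ₁, GaleLE d.le C C₁) →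
      (∀ C ∈ Phi '' ℬ₂, GaleLE d.le C C₂) →
      ¬ ∃ i : J n, symmDiff C₁ C₂ = {i, jstar i} :=
  not_quotient_implies_not_lagrangian_pair_general n k ℬ₁ ℬ₂ h₁ h₂ hq
end

section
/- If 𝔅_3, the exploded sum of two collections 𝔅_1, 𝔅_2 of admissible n-subsets of [n] ∪ [n]*, satisfies the Strong Exchange Property on [n+1] ∪ [n+1]*, then 𝔅_1 ∪ 𝔅_2 satisfies the Symmetric Exchange Axiom for Lagrangian symplectic matroids: for all A, B ∈ 𝔅_1 ∪ 𝔅_2 and a ∈ A △ B, there exists b ∈ A △ B (possibly b = a*) such that A △ {a, a*, b, b*} ∈ 𝔅_1 ∪ 𝔅_2. -/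
/-- Inclusion of `[n] ∪ [n]*` into `[n+1] ∪ [n+1]*`. -/
def jlift {n : ℕ} (x : J n) : J (n + 1) := (x.1.castSucc, x.2)

/-- The exploded sum `𝔅₃` of two collections of admissible `n`-subsets of `[n] ∪ [n]*`:
`{B ∪ {n+1} : B ∈ 𝔅₁} ∪ {B ∪ {(n+1)*} : B ∈ 𝔅₂}`. -/
def explodedSum {n : ℕ} (𝔅₁ 𝔅₂ : Set (Finset (J n))) : Set (Finset (J (n + 1))) :=
  {C | ∃ B ∈ 𝔅₁, C = insert (Fin.last n, false) (B.image jlift)} ∪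
  {C | ∃ B ∈ 𝔅₂, C = insert (Fin.last n, true) (B.image jlift)}

/-- The Symmetric Exchange Axiom for Lagrangian symplectic matroids. -/
def SymExchange {n : ℕ} (𝔅 : Set (Finset (J n))) : Prop :=
  ∀ A ∈ 𝔅, ∀ C ∈ 𝔅, ∀ a ∈ symmDiff A C, ∃ b ∈ symmDiff A C,
    symmDiff A {a, jstar a, b, jstar b} ∈ 𝔅

/-!
A basis `B` of `𝔅₁` or `𝔅₂` sits in `𝔅₃` as `B` plus a marker `n+1` or `(n+1)*`. Strong
exchange in `𝔅₃` at `a ∈ A △ C` yields some `b'`. If `b'` lies in `[n] ∪ [n]*`, the exchange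
restricts to one in `𝔅₁ ∪ 𝔅₂` with `b = b'`. If `b'` is a marker, the exchange swaps the two
markers, and what is left of it in `[n] ∪ [n]*` is `A △ {a, a*}`, the exchange with `b = a`.
-/

namespace J

open Finset

variable {n : ℕ}

@[simp] lemma jstar_jlift (x : J n) : jstar (jlift x) = jlift (jstar x) := rfl

@[simp] lemma jstar_last (β : Bool) : jstar ((Fin.last n, β) : J (n + 1)) = (Fin.last n, !β) := rfl

lemma jlift_injective : Function.Injective (@jlift n) := by
  rintro ⟨i, β⟩ ⟨j, γ⟩ h
  simpa [jlift] using h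

@[simp] lemma jlift_inj {x y : J n} : jlift x = jlift y ↔ x = y := jlift_injective.eq_iff

@[simp] lemma jlift_ne_last (x : J n) (β : Bool) : jlift x ≠ (Fin.last n, β) :=
  fun h => (Fin.castSucc_lt_last x.1).ne (congrArg Prod.fst h)

@[simp] lemma last_ne_jlift (x : J n) (β : Bool) : (Fin.last n, β) ≠ jlift x :=
  (jlift_ne_last x β).symm

lemma eq_jlift_or_eq_last (y : J (n + 1)) : (∃ x, y = jlift x) ∨ ∃ β, y = (Fin.last n, β) := by
  obtain ⟨i, β⟩ := y
  rcases Fin.eq_castSucc_or_eq_last i with ⟨j, rfl⟩ | rfl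
  · exact Or.inl ⟨(j, β), rfl⟩
  · exact Or.inr ⟨β, rfl⟩

lemma finset_ext_jlift_last {S T : Finset (J (n + 1))}
    (hlift : ∀ x, jlift x ∈ S ↔ jlift x ∈ T)
    (hlast : ∀ β, (Fin.last n, β) ∈ S ↔ (Fin.last n, β) ∈ T) : S = T := by
  ext y
  rcases eq_jlift_or_eq_last y with ⟨x, rfl⟩ | ⟨β, rfl⟩
  exacts [hlift x, hlast β]

def lift (ε : Bool) (B : Finset (J n)) : Finset (J (n + 1)) :=
  insert (Fin.last n, ε) (B.image jlift)

@[simp] lemma jlift_mem_lift {ε : Bool} {B : Finset (J n)} {x : J n} :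
    jlift x ∈ lift ε B ↔ x ∈ B := by
  simp [lift]

@[simp] lemma last_mem_lift {ε β : Bool} {B : Finset (J n)} :
    (Fin.last n, β) ∈ lift ε B ↔ β = ε := by
  simp [lift]

lemma lift_inj {ε ε' : Bool} {B B' : Finset (J n)} :
    lift ε B = lift ε' B' ↔ ε = ε' ∧ B = B' := by
  refine ⟨fun h => ⟨?_, ?_⟩, fun ⟨hε, hB⟩ => hε ▸ hB ▸ rfl⟩
  · have hmem : (Fin.last n, ε) ∈ lift ε' B' := h ▸ last_mem_lift.2 rfl
    simpa using hmem
  · ext x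
    rw [← jlift_mem_lift (ε := ε), ← jlift_mem_lift (ε := ε') (B := B'), h]

lemma jlift_mem_symmDiff_lift {ε ε' : Bool} {A C : Finset (J n)} {x : J n} :
    jlift x ∈ symmDiff (lift ε A) (lift ε' C) ↔ x ∈ symmDiff A C := by
  simp [mem_symmDiff]

lemma symmDiff_lift_jlift (ε : Bool) (A : Finset (J n)) (a b : J n) :
    symmDiff (lift ε A) {jlift a, jlift b, jstar (jlift a), jstar (jlift b)} =
      lift ε (symmDiff A {a, jstar a, b, jstar b}) := by
  refine finset_ext_jlift_last (fun x => ?_) (fun β => ?_)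
  · simp only [mem_symmDiff, jlift_mem_lift, jstar_jlift, mem_insert, mem_singleton, jlift_inj]
    tauto
  · simp [mem_symmDiff]

lemma symmDiff_lift_last (ε β : Bool) (A : Finset (J n)) (a : J n) :
    symmDiff (lift ε A) {jlift a, (Fin.last n, β), jstar (jlift a), jstar (Fin.last n, β)} =
      lift (!ε) (symmDiff A {a, jstar a}) := by
  refine finset_ext_jlift_last (fun x => ?_) (fun γ => ?_)
  · simp only [mem_symmDiff, jlift_mem_lift, jstar_jlift, jstar_last, mem_insert,
      mem_singleton, jlift_inj, jlift_ne_last]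
    tauto
  · cases ε <;> cases β <;> cases γ <;> simp [mem_symmDiff]

lemma lift_mem_explodedSum_iff {𝔅₁ 𝔅₂ : Set (Finset (J n))} {ε : Bool} {B : Finset (J n)} :
    lift ε B ∈ explodedSum 𝔅₁ 𝔅₂ ↔ B ∈ (bif ε then 𝔅₂ else 𝔅₁) := by
  have hES : explodedSum 𝔅₁ 𝔅₂ =
      {C | ∃ B ∈ 𝔅₁, C = lift false B} ∪ {C | ∃ B ∈ 𝔅₂, C = lift true B} := rfl
  cases ε <;> simp [hES, lift_inj]

lemma exists_lift_mem_explodedSum {𝔅₁ 𝔅₂ : Set (Finset (J n))} {B : Finset (J n)}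
    (hB : B ∈ 𝔅₁ ∪ 𝔅₂) : ∃ ε, lift ε B ∈ explodedSum 𝔅₁ 𝔅₂ := by
  rcases hB with hB | hB
  exacts [⟨false, lift_mem_explodedSum_iff.2 hB⟩, ⟨true, lift_mem_explodedSum_iff.2 hB⟩]

lemma mem_union_of_lift_mem_explodedSum {𝔅₁ 𝔅₂ : Set (Finset (J n))} {ε : Bool}
    {B : Finset (J n)} (hB : lift ε B ∈ explodedSum 𝔅₁ 𝔅₂) : B ∈ 𝔅₁ ∪ 𝔅₂ := by
  cases ε
  exacts [Or.inl (lift_mem_explodedSum_iff.1 hB), Or.inr (lift_mem_explodedSum_iff.1 hB)]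

end J

open J

theorem exploded_sum_implies_sym_exchange_general (n : ℕ) (𝔅₁ 𝔅₂ : Set (Finset (J n)))
    (hSE : StrongExchange (explodedSum 𝔅₁ 𝔅₂)) :
    SymExchange (𝔅₁ ∪ 𝔅₂) := by
  intro A hA C hC a ha
  obtain ⟨εA, hA'⟩ := exists_lift_mem_explodedSum hA
  obtain ⟨εC, hC'⟩ := exists_lift_mem_explodedSum hC
  obtain ⟨b', hb', -, hD, -⟩ := hSE _ hA' _ hC' _ (jlift_mem_symmDiff_lift.2 ha)
  rcases eq_jlift_or_eq_last b' with ⟨b, rfl⟩ | ⟨β, rfl⟩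
  · refine ⟨b, ?_, mem_union_of_lift_mem_explodedSum (symmDiff_lift_jlift εA A a b ▸ hD)⟩
    simp only [Finset.mem_sdiff, jlift_mem_lift] at hb'
    exact Finset.mem_symmDiff.2 (Or.inr hb')
  · refine ⟨a, ha, ?_⟩
    simpa using mem_union_of_lift_mem_explodedSum (symmDiff_lift_last εA β A a ▸ hD)

/-- if the exploded sum `𝔅₃` of `𝔅₁`, `𝔅₂` satisfies the Strong Exchange
Property on `[n+1] ∪ [n+1]*`, then `𝔅₁ ∪ 𝔅₂` satisfies the Symmetric Exchange Axiom. -/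
theorem exploded_sum_implies_sym_exchange (n : ℕ) (𝔅₁ 𝔅₂ : Set (Finset (J n)))
    (hadm₁ : ∀ B ∈ 𝔅₁, Admissible B ∧ B.card = n)
    (hadm₂ : ∀ B ∈ 𝔅₂, Admissible B ∧ B.card = n)
    (hSE : StrongExchange (explodedSum 𝔅₁ 𝔅₂)) :
    SymExchange (𝔅₁ ∪ 𝔅₂) :=
  exploded_sum_implies_sym_exchange_general n 𝔅₁ 𝔅₂ hSE
end
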